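/- For each pair (A,B) of objects of the 2-category C, let δ_{AB} : Hom(C(A,B), M) → K_C be the left adjoint ('Dirac mass') of the projection p_{AB} : K_C → Hom(C(A,B), M), and let I_{AB} (resp. J_{AB}) be a set of generating cofibrations (resp. generating trivial cofibrations) of Hom(C(A,B), M). Then: (1) the sets ∐_{(A,B)} { δ_{AB}(α) : α ∈ I_{AB} } and ∐_{(A,B)} { δ_{AB}(α) : α ∈ J_{AB} } are sets of generating cofibrations, respectively generating trivial cofibrations, of K_C with the product model structure; (2) the sets ∐_{(A,B)} { Γ[δ_{AB}(α)] : α ∈ I_{AB} } and ∐_{(A,B)} { Γ[δ_{AB}(α)] : α ∈ J_{AB} } are generating sets of cofibrations, respectively trivial cofibrations, for the transferred model structure on Lax(C,M)_n. -/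

import Mathlib

open CategoryTheory CategoryTheory.Limits MonoidalCategory

universe w v u v₁ u₁ v₂ u₂

noncomputable section

/-! ### Model structures -/

section ModelStructures

variable {C : Type u} [Category.{v} C]

/-- `f` is a retract of `g` in the arrow category. -/
def IsRetractOfMaps {X Y X' Y' : C} (f : X ⟶ Y) (g : X' ⟶ Y') : Prop :=
  ∃ (iX : X ⟶ X') (rX : X' ⟶ X) (iY : Y ⟶ Y') (rY : Y' ⟶ Y),
    iX ≫ rX = 𝟙 X ∧ iY ≫ rY = 𝟙 Y ∧ iX ≫ g = f ≫ iY ∧ g ≫ rY = rX ≫ f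

/-- A (Quillen) model structure on a category: three classes of maps (weak equivalences,
cofibrations, fibrations) satisfying the usual axioms (two-out-of-three, closure under
retracts, the lifting axioms and the factorization axioms). -/
structure ModelStructure (C : Type u) [Category.{v} C] : Type (max u v) where
  W : MorphismProperty C
  Cof : MorphismProperty C
  Fib : MorphismProperty C
  W_of_isIso : ∀ {X Y : C} (f : X ⟶ Y), IsIso f → W f
  W_comp : ∀ {X Y Z : C} (f : X ⟶ Y) (g : Y ⟶ Z), W f → W g → W (f ≫ g)
  W_of_comp_left : ∀ {X Y Z : C} (f : X ⟶ Y) (g : Y ⟶ Z), W (f ≫ g) → W g → W f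
  W_of_comp_right : ∀ {X Y Z : C} (f : X ⟶ Y) (g : Y ⟶ Z), W (f ≫ g) → W f → W g
  W_retract : ∀ {X Y X' Y' : C} (f : X ⟶ Y) (g : X' ⟶ Y'), IsRetractOfMaps f g → W g → W f
  Cof_retract : ∀ {X Y X' Y' : C} (f : X ⟶ Y) (g : X' ⟶ Y'),
    IsRetractOfMaps f g → Cof g → Cof f
  Fib_retract : ∀ {X Y X' Y' : C} (f : X ⟶ Y) (g : X' ⟶ Y'),
    IsRetractOfMaps f g → Fib g → Fib f
  lift_cof_trivFib : ∀ {A B P Q : C} (i : A ⟶ B) (p : P ⟶ Q),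
    Cof i → Fib p → W p → HasLiftingProperty i p
  lift_trivCof_fib : ∀ {A B P Q : C} (i : A ⟶ B) (p : P ⟶ Q),
    Cof i → W i → Fib p → HasLiftingProperty i p
  factor_cof_trivFib : ∀ {X Y : C} (f : X ⟶ Y),
    ∃ (Z : C) (i : X ⟶ Z) (p : Z ⟶ Y), Cof i ∧ Fib p ∧ W p ∧ i ≫ p = f
  factor_trivCof_fib : ∀ {X Y : C} (f : X ⟶ Y),
    ∃ (Z : C) (i : X ⟶ Z) (p : Z ⟶ Y), Cof i ∧ W i ∧ Fib p ∧ i ≫ p = f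

/-- An object is cofibrant if it has the left lifting property (for maps out of it)
against all trivial fibrations; in the presence of an initial object this is the usual
notion `Cof (⊥ ⟶ X)`. -/
def ModelStructure.CofibrantObj (m : ModelStructure C) (X : C) : Prop :=
  ∀ {P Q : C} (p : P ⟶ Q), m.Fib p → m.W p → ∀ f : X ⟶ Q, ∃ g : X ⟶ P, g ≫ p = f

/-- A Quillen adjunction: the left adjoint preserves cofibrations and trivial cofibrations. -/
def IsQuillenAdjunction {D : Type u₁} [Category.{v₁} D]
    (mC : ModelStructure C) (mD : ModelStructure D)
    (F : C ⥤ D) (G : D ⥤ C) (_adj : F ⊣ G) : Prop :=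
  (∀ {X Y : C} (f : X ⟶ Y), mC.Cof f → mD.Cof (F.map f)) ∧
  (∀ {X Y : C} (f : X ⟶ Y), mC.Cof f → mC.W f → mD.Cof (F.map f) ∧ mD.W (F.map f))

/-- A functor `U : D ⥤ C` is right Quillen if it has a left adjoint and preserves
fibrations and trivial fibrations. -/
def IsRightQuillen {D : Type u₁} [Category.{v₁} D]
    (mD : ModelStructure D) (mC : ModelStructure C) (U : D ⥤ C) : Prop :=
  U.IsRightAdjoint ∧
  (∀ {X Y : D} (f : X ⟶ Y), mD.Fib f → mC.Fib (U.map f)) ∧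
  (∀ {X Y : D} (f : X ⟶ Y), mD.Fib f → mD.W f → mC.Fib (U.map f) ∧ mC.W (U.map f))

/-- The right lifting property against a set of arrows. -/
def RlpSet (S : Set (Arrow C)) : MorphismProperty C :=
  fun _ _ p => ∀ a ∈ S, HasLiftingProperty a.hom p

/-- `S` is a set of generating cofibrations for the model structure `m`:
the trivial fibrations are exactly the maps with the right lifting property against `S`. -/
def GeneratesCofibrations (m : ModelStructure C) (S : Set (Arrow C)) : Prop :=
  (∀ a ∈ S, m.Cof a.hom) ∧
  ∀ {X Y : C} (p : X ⟶ Y), (m.Fib p ∧ m.W p) ↔ RlpSet S p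

/-- `S` is a set of generating trivial cofibrations for the model structure `m`:
the fibrations are exactly the maps with the right lifting property against `S`. -/
def GeneratesTrivialCofibrations (m : ModelStructure C) (S : Set (Arrow C)) : Prop :=
  (∀ a ∈ S, m.Cof a.hom ∧ m.W a.hom) ∧
  ∀ {X Y : C} (p : X ⟶ Y), m.Fib p ↔ RlpSet S p

/-- A model structure is cofibrantly generated if it admits sets of generating
cofibrations and generating trivial cofibrations. -/
def IsCofibrantlyGenerated (m : ModelStructure C) : Prop :=
  ∃ (I J : Set (Arrow C)), GeneratesCofibrations m I ∧ GeneratesTrivialCofibrations m J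

end ModelStructures

/-! ### Monoidal model categories -/

section MonoidalModel

variable {M : Type u} [Category.{v} M] [MonoidalCategory M]

/-- A (symmetric) monoidal model category: a model structure together with the
pushout-product axiom and the unit axiom. -/
structure MonoidalModel (M : Type u) [Category.{v} M] [MonoidalCategory M]
    [HasColimits M] extends ModelStructure M where
  pushoutProduct : ∀ {A B P Q : M} (f : A ⟶ B) (g : P ⟶ Q) (_ : Cof f) (_ : Cof g),
    Cof (pushout.desc (f ▷ Q) (B ◁ g) (whisker_exchange f g) :
      pushout (A ◁ g) (f ▷ P) ⟶ B ⊗ Q)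
  pushoutProduct_left : ∀ {A B P Q : M} (f : A ⟶ B) (g : P ⟶ Q)
    (_ : Cof f) (_ : W f) (_ : Cof g),
    W (pushout.desc (f ▷ Q) (B ◁ g) (whisker_exchange f g) :
      pushout (A ◁ g) (f ▷ P) ⟶ B ⊗ Q)
  pushoutProduct_right : ∀ {A B P Q : M} (f : A ⟶ B) (g : P ⟶ Q)
    (_ : Cof f) (_ : Cof g) (_ : W g),
    W (pushout.desc (f ▷ Q) (B ◁ g) (whisker_exchange f g) :
      pushout (A ◁ g) (f ▷ P) ⟶ B ⊗ Q)
  unit_axiom : ∀ {Q₀ : M} (q : Q₀ ⟶ 𝟙_ M), Cof (initial.to Q₀) → W q →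
    ∀ (X : M), Cof (initial.to X) → W (q ▷ X) ∧ W (X ◁ q)

end MonoidalModel

/-! ### Levelwise classes and projective structures on functor categories -/

section Projective

variable {J : Type u₁} [Category.{v₁} J] {M : Type u} [Category.{v} M]

/-- Levelwise weak equivalences in a functor category. -/
def LvlW (m : ModelStructure M) : MorphismProperty (J ⥤ M) :=
  fun _ _ σ => ∀ j, m.W (σ.app j)

/-- Levelwise fibrations in a functor category. -/
def LvlFib (m : ModelStructure M) : MorphismProperty (J ⥤ M) :=
  fun _ _ σ => ∀ j, m.Fib (σ.app j)

/-- Projective cofibrations: maps with the left lifting property against levelwise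
trivial fibrations. -/
def ProjCof (m : ModelStructure M) : MorphismProperty (J ⥤ M) :=
  fun _ _ i => ∀ {P Q : J ⥤ M} (p : P ⟶ Q), LvlFib m p → LvlW m p → HasLiftingProperty i p

/-- A projectively cofibrant diagram: it lifts against all levelwise trivial fibrations. -/
def ProjCofibrantObj (m : ModelStructure M) (G : J ⥤ M) : Prop :=
  ∀ {P Q : J ⥤ M} (p : P ⟶ Q), LvlFib m p → LvlW m p →
    ∀ u : G ⟶ Q, ∃ v : G ⟶ P, v ≫ p = u

/-- `mJ` is the projective model structure on `J ⥤ M` over `m`: weak equivalences and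
fibrations are levelwise. -/
def IsProjectiveStructure (m : ModelStructure M) (mJ : ModelStructure (J ⥤ M)) : Prop :=
  mJ.W = LvlW m ∧ mJ.Fib = LvlFib m

end Projective
/-! ### Reedy categories and latching objects -/

section Reedy

variable {J : Type u₁} [Category.{v₁} J]

/-- A Reedy structure on a category: a degree function together with wide subcategories
of degree-raising ("direct") and degree-lowering ("inverse") morphisms, such that every
morphism factors (uniquely up to unique isomorphism) as a degree-lowering morphism
followed by a degree-raising one. -/
structure ReedyStructure (J : Type u₁) [Category.{v₁} J] : Type (max u₁ v₁) where
  deg : J → ℕ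
  plus : MorphismProperty J
  minus : MorphismProperty J
  plus_id : ∀ j : J, plus (𝟙 j)
  minus_id : ∀ j : J, minus (𝟙 j)
  plus_comp : ∀ {i j k : J} (f : i ⟶ j) (g : j ⟶ k), plus f → plus g → plus (f ≫ g)
  minus_comp : ∀ {i j k : J} (f : i ⟶ j) (g : j ⟶ k), minus f → minus g → minus (f ≫ g)
  plus_le : ∀ {i j : J} (f : i ⟶ j), plus f → deg i ≤ deg j
  minus_le : ∀ {i j : J} (f : i ⟶ j), minus f → deg j ≤ deg i
  plus_eq : ∀ {i j : J} (f : i ⟶ j), plus f → deg i = deg j → ∃ h : i = j, f = eqToHom h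
  minus_eq : ∀ {i j : J} (f : i ⟶ j), minus f → deg i = deg j → ∃ h : i = j, f = eqToHom h
  fact : ∀ {i j : J} (f : i ⟶ j),
    ∃ (k : J) (g : i ⟶ k) (h : k ⟶ j), minus g ∧ plus h ∧ g ≫ h = f
  fact_unique : ∀ {i j : J} (f : i ⟶ j) (k k' : J) (g : i ⟶ k) (h : k ⟶ j)
    (g' : i ⟶ k') (h' : k' ⟶ j), minus g → plus h → g ≫ h = f →
    minus g' → plus h' → g' ≫ h' = f →
    ∃! e : k ≅ k', g ≫ e.hom = g' ∧ e.hom ≫ h' = h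

/-- A Reedy category is direct if its inverse part consists of identities only. -/
def ReedyStructure.IsDirect (R : ReedyStructure J) : Prop :=
  ∀ {i j : J} (f : i ⟶ j), R.minus f → ∃ h : i = j, f = eqToHom h

/-- The latching category of `J` at `j`: the full subcategory of `Over j` consisting of
the non-invertible degree-raising morphisms into `j`. -/
def LatchIndex (R : ReedyStructure J) (j : J) : Type max u₁ v₁ :=
  ObjectProperty.FullSubcategory (fun f : Over j => R.plus f.hom ∧ ¬ IsIso f.hom)

instance (R : ReedyStructure J) (j : J) : Category (LatchIndex R j) :=
  ObjectProperty.FullSubcategory.category _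

variable {M : Type u} [Category.{v} M]

/-- The diagram over the latching category whose colimit is the latching object. -/
def latchDiagram (R : ReedyStructure J) (F : J ⥤ M) (j : J) : LatchIndex R j ⥤ M :=
  ObjectProperty.ι _ ⋙ Over.forget j ⋙ F

variable [HasColimitsOfSize.{v₁, max u₁ v₁} M]

/-- The latching object of `F` at `j`. -/
def latchObj (R : ReedyStructure J) (F : J ⥤ M) (j : J) : M :=
  colimit (latchDiagram R F j)

/-- The canonical cocone over the latching diagram with point `F.obj j`. -/
@[simps]
def latchCocone (R : ReedyStructure J) (F : J ⥤ M) (j : J) : Cocone (latchDiagram R F j) where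
  pt := F.obj j
  ι :=
    { app := fun f => F.map f.obj.hom
      naturality := by
        intro f g φ
        dsimp [latchDiagram]
        exact ((F.map_comp _ _).symm.trans
          (congrArg F.map (Over.w ((ObjectProperty.ι _).map φ)))).trans (Category.comp_id _).symm }

/-- The canonical latching map `L(F, j) ⟶ F(j)`. -/
def latchMap (R : ReedyStructure J) (F : J ⥤ M) (j : J) : latchObj R F j ⟶ F.obj j :=
  colimit.desc _ (latchCocone R F j)

/-- A Reedy cofibrant diagram: all latching maps are cofibrations. -/
def ReedyCofibrantObj (m : ModelStructure M) (R : ReedyStructure J) (F : J ⥤ M) : Prop :=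
  ∀ j : J, m.Cof (latchMap R F j)

end Reedy
/-! ### Relative latching maps and Reedy cofibrations -/

section ReedyCof

variable {J : Type u₁} [Category.{v₁} J] {M : Type u} [Category.{v} M]
variable [HasColimitsOfSize.{v₁, max u₁ v₁} M] [HasPushouts M]

/-- The map induced on latching objects by a morphism of diagrams. -/
def latchNat (R : ReedyStructure J) {F G : J ⥤ M} (σ : F ⟶ G) (j : J) :
    latchObj R F j ⟶ latchObj R G j :=
  colimMap (Functor.whiskerLeft (ObjectProperty.ι _ ⋙ Over.forget j) σ)

lemma latch_square (R : ReedyStructure J) {F G : J ⥤ M} (σ : F ⟶ G) (j : J) :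
    latchMap R F j ≫ σ.app j = latchNat R σ j ≫ latchMap R G j := by
  apply colimit.hom_ext
  intro f
  erw [colimit.ι_desc_assoc, ι_colimMap_assoc, colimit.ι_desc]
  exact σ.naturality _

/-- The relative latching map `F(j) ∪_{L(F,j)} L(G,j) ⟶ G(j)` of a morphism of
diagrams. -/
def relLatchMap (R : ReedyStructure J) {F G : J ⥤ M} (σ : F ⟶ G) (j : J) :
    pushout (latchMap R F j) (latchNat R σ j) ⟶ G.obj j :=
  pushout.desc (σ.app j) (latchMap R G j) (latch_square R σ j)

/-- Reedy cofibrations of diagrams: all relative latching maps are cofibrations. -/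
def ReedyCof (m : ModelStructure M) (R : ReedyStructure J) :
    MorphismProperty (J ⥤ M) :=
  fun _ _ σ => ∀ j, m.Cof (relLatchMap R σ j)

/-- `mJ` is the Reedy model structure on `J ⥤ M`: weak equivalences are levelwise and
cofibrations are the Reedy cofibrations. -/
def IsReedyModelStructure (m : ModelStructure M) (R : ReedyStructure J)
    (mJ : ModelStructure (J ⥤ M)) : Prop :=
  mJ.W = LvlW m ∧ mJ.Cof = ReedyCof m R

end ReedyCof
/-! ### Normal lax functors from a strict 2-category to a monoidal category -/

section TwoCat

variable (B : Type u₁) [Bicategory.{w, v₁} B] [Bicategory.Strict B]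
variable (M : Type u) [Category.{v} M] [MonoidalCategory M]

/-- A normal lax functor from a strict 2-category `B` to a monoidal category `M`
(viewed as a one-object 2-category): it assigns objects of `M` to 1-cells, morphisms to
2-cells, has natural and associative laxity maps, and is normalized at identities. -/
structure NormalLax : Type (max u₁ v₁ w u v) where
  obj : ∀ {a b : B}, (a ⟶ b) → M
  map : ∀ {a b : B} {f g : a ⟶ b}, (f ⟶ g) → (obj f ⟶ obj g)
  map_id : ∀ {a b : B} (f : a ⟶ b), map (𝟙 f) = 𝟙 (obj f)
  map_comp : ∀ {a b : B} {f g h : a ⟶ b} (η : f ⟶ g) (θ : g ⟶ h),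
    map (η ≫ θ) = map η ≫ map θ
  lax : ∀ {a b c : B} (f : a ⟶ b) (g : b ⟶ c), obj f ⊗ obj g ⟶ obj (f ≫ g)
  lax_natural : ∀ {a b c : B} {f f' : a ⟶ b} {g g' : b ⟶ c} (η : f ⟶ f') (θ : g ⟶ g'),
    (map η ⊗ₘ map θ) ≫ lax f' g' = lax f g ≫ map (Bicategory.whiskerRight η g ≫ Bicategory.whiskerLeft f' θ)
  unit : ∀ a : B, obj (𝟙 a) = 𝟙_ M
  lax_unit_left : ∀ {a b : B} (f : a ⟶ b),
    lax (𝟙 a) f ≫ eqToHom (congrArg obj (Category.id_comp f)) =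
      eqToHom (by rw [unit a]) ≫ (λ_ (obj f)).hom
  lax_unit_right : ∀ {a b : B} (f : a ⟶ b),
    lax f (𝟙 b) ≫ eqToHom (congrArg obj (Category.comp_id f)) =
      eqToHom (by rw [unit b]) ≫ (ρ_ (obj f)).hom
  lax_assoc : ∀ {a b c d : B} (f : a ⟶ b) (g : b ⟶ c) (h : c ⟶ d),
    (lax f g ▷ obj h) ≫ lax (f ≫ g) h ≫ eqToHom (congrArg obj (Category.assoc f g h)) =
      (α_ _ _ _).hom ≫ (obj f ◁ lax g h) ≫ lax f (g ≫ h)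

variable {B M}

/-- Icons between normal lax functors. -/
structure NormalLaxHom (F G : NormalLax B M) : Type (max u₁ v₁ w v) where
  app : ∀ {a b : B} (f : a ⟶ b), F.obj f ⟶ G.obj f
  naturality : ∀ {a b : B} {f g : a ⟶ b} (η : f ⟶ g),
    F.map η ≫ app g = app f ≫ G.map η
  unit_compat : ∀ a : B, app (𝟙 a) = eqToHom (by rw [F.unit, G.unit])
  lax_compat : ∀ {a b c : B} (f : a ⟶ b) (g : b ⟶ c),
    F.lax f g ≫ app (f ≫ g) = (app f ⊗ₘ app g) ≫ G.lax f g

theorem NormalLaxHom.ext' {F G : NormalLax B M} {σ τ : NormalLaxHom F G}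
    (h : ∀ {a b : B} (f : a ⟶ b), σ.app f = τ.app f) : σ = τ := by
  cases σ; cases τ
  simp only [NormalLaxHom.mk.injEq]
  funext a b f
  exact h f

instance : Category (NormalLax B M) where
  Hom := NormalLaxHom
  id F :=
    { app := fun f => 𝟙 (F.obj f)
      naturality := by intros; simp
      unit_compat := by intros; simp
      lax_compat := by intros; simp }
  comp σ τ :=
    { app := fun f => σ.app f ≫ τ.app f
      naturality := by
        intro a b f g η
        rw [← Category.assoc, σ.naturality, Category.assoc, τ.naturality, Category.assoc]
      unit_compat := by
        intro a
        show σ.app (𝟙 a) ≫ τ.app (𝟙 a) = _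
        rw [σ.unit_compat, τ.unit_compat, eqToHom_trans]
      lax_compat := by
        intro a b c f g
        rw [← MonoidalCategory.tensorHom_comp_tensorHom, ← Category.assoc, σ.lax_compat,
          Category.assoc, τ.lax_compat, Category.assoc] }
  id_comp := by intros; apply NormalLaxHom.ext'; intros; simp
  comp_id := by intros; apply NormalLaxHom.ext'; intros; simp
  assoc := by intros; apply NormalLaxHom.ext'; intros; simp

end TwoCat
/-! ### The forgetful functor and locally Reedy structures -/

section TwoCat2

variable {B : Type u₁} [Bicategory.{w, v₁} B] [Bicategory.Strict B]
variable {M : Type u} [Category.{v} M] [MonoidalCategory M]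

@[simp] lemma NormalLax.comp_app {F G H : NormalLax B M} (σ : F ⟶ G) (τ : G ⟶ H)
    {a b : B} (f : a ⟶ b) :
    NormalLaxHom.app (σ ≫ τ) f = NormalLaxHom.app σ f ≫ NormalLaxHom.app τ f := rfl

/-- The component diagram of a normal lax functor at a pair of objects. -/
def NormalLax.component (F : NormalLax B M) (a b : B) : (a ⟶ b) ⥤ M where
  obj := F.obj
  map := F.map
  map_id := F.map_id
  map_comp := F.map_comp

variable (B M)

/-- The category `K_C = ∏_{A,B} Hom[C(A,B), M]` of families of diagrams. -/
def KB := ∀ a b : B, (a ⟶ b) ⥤ M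

instance : Category (KB B M) := by unfold KB; infer_instance

/-- The forgetful functor `U : Lax(C, M)_n ⟶ K_C`. -/
def laxForget : NormalLax B M ⥤ KB B M where
  obj F := fun a b => F.component a b
  map σ := fun a b =>
    { app := fun f => σ.app f
      naturality := fun _ _ η => σ.naturality η }
  map_id := by intros; rfl
  map_comp := by intros; rfl

variable {B M}

/-- Levelwise weak equivalences in `K_C`. -/
def KBW (m : ModelStructure M) : MorphismProperty (KB B M) :=
  fun _ _ σ => ∀ (a b : B) (f : a ⟶ b), m.W ((σ a b).app f)

/-- Levelwise fibrations in `K_C`. -/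
def KBFib (m : ModelStructure M) : MorphismProperty (KB B M) :=
  fun _ _ σ => ∀ (a b : B) (f : a ⟶ b), m.Fib ((σ a b).app f)

/-- `mK` is the product projective model structure on `K_C`. -/
def IsKBProjective (m : ModelStructure M) (mK : ModelStructure (KB B M)) : Prop :=
  mK.W = KBW m ∧ mK.Fib = KBFib m

/-- A locally Reedy structure on a strict 2-category: a Reedy structure on each
hom-category, with degrees additive under horizontal composition ("simple") and with
both parts stable under horizontal composition. -/
structure LocallyReedy (B : Type u₁) [Bicategory.{w, v₁} B] [Bicategory.Strict B] :
    Type (max u₁ v₁ w) where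
  R : ∀ a b : B, ReedyStructure (a ⟶ b)
  deg_hcomp : ∀ {a b c : B} (f : a ⟶ b) (g : b ⟶ c),
    (R a c).deg (f ≫ g) = (R a b).deg f + (R b c).deg g
  plus_hcomp : ∀ {a b c : B} {f f' : a ⟶ b} {g g' : b ⟶ c} (η : f ⟶ f') (θ : g ⟶ g'),
    (R a b).plus η → (R b c).plus θ →
      (R a c).plus (Bicategory.whiskerRight η g ≫ Bicategory.whiskerLeft f' θ)
  minus_hcomp : ∀ {a b c : B} {f f' : a ⟶ b} {g g' : b ⟶ c} (η : f ⟶ f') (θ : g ⟶ g'),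
    (R a b).minus η → (R b c).minus θ →
      (R a c).minus (Bicategory.whiskerRight η g ≫ Bicategory.whiskerLeft f' θ)

variable (RC : LocallyReedy B)

/-- The inverse part of a hom-category: the wide subcategory of degree-lowering
2-morphisms. -/
structure InvPart (RC : LocallyReedy B) (a b : B) : Type v₁ where
  c : a ⟶ b

instance (a b : B) : Category (InvPart RC a b) where
  Hom f g := { η : f.c ⟶ g.c // (RC.R a b).minus η }
  id f := ⟨𝟙 f.c, (RC.R a b).minus_id f.c⟩
  comp η θ := ⟨η.1 ≫ θ.1, (RC.R a b).minus_comp _ _ η.2 θ.2⟩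
  id_comp := by intros; apply Subtype.ext; simp
  comp_id := by intros; apply Subtype.ext; simp
  assoc := by intros; apply Subtype.ext; simp

/-- The horizontal composition functor restricted to the inverse parts. -/
def invComp (a b c : B) : InvPart RC a b × InvPart RC b c ⥤ InvPart RC a c where
  obj p := ⟨p.1.c ≫ p.2.c⟩
  map {p q} η := ⟨Bicategory.whiskerRight η.1.1 p.2.c ≫
      Bicategory.whiskerLeft q.1.c η.2.1,
    RC.minus_hcomp _ _ η.1.2 η.2.2⟩
  map_id := by
    intro p
    apply Subtype.ext
    simp [CategoryStruct.id]
  map_comp := by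
    intro p q r η θ
    apply Subtype.ext
    simp [CategoryStruct.comp, Bicategory.whisker_exchange_assoc]

/-- Inverse divisibility: all the composition functors between the inverse parts are
Grothendieck fibrations. -/
def LocallyReedy.IsInverseDivisible (RC : LocallyReedy B) : Prop :=
  ∀ a b c : B, (invComp RC a b c).IsFibered

/-- A locally Reedy 2-category is totally direct if every 2-morphism is degree-raising
and the inverse parts are trivial. -/
def LocallyReedy.IsTotallyDirect (RC : LocallyReedy B) : Prop :=
  ∀ a b : B, (∀ {f g : a ⟶ b} (η : f ⟶ g), (RC.R a b).plus η) ∧ (RC.R a b).IsDirect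

variable [HasColimitsOfSize.{w, max v₁ w} M] [HasPushouts M]

/-- `mK` is the product Reedy model structure on `K_C`. -/
def IsKBReedy (m : ModelStructure M) (RC : LocallyReedy B)
    (mK : ModelStructure (KB B M)) : Prop :=
  mK.W = KBW m ∧
  mK.Cof = fun _ _ σ => ∀ a b : B, ReedyCof m (RC.R a b) (σ a b)

/-- `U(F)` is cofibrant in the product Reedy structure: each component diagram is Reedy
cofibrant. -/
def UCofibrantB (m : ModelStructure M) (RC : LocallyReedy B) (F : NormalLax B M) : Prop :=
  ∀ a b : B, ReedyCofibrantObj m (RC.R a b) (F.component a b)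

/-- Levelwise weak equivalences of normal lax functors. -/
def LaxBW (m : ModelStructure M) : MorphismProperty (NormalLax B M) :=
  fun _ _ σ => ∀ {a b : B} (f : a ⟶ b), m.W (σ.app f)

/-- An excellent lax diagram: one admitting a levelwise weak equivalence to a
`U`-cofibrant one. -/
def ExcellentB (m : ModelStructure M) (RC : LocallyReedy B) (F : NormalLax B M) : Prop :=
  ∃ (G : NormalLax B M) (σ : F ⟶ G), LaxBW m σ ∧ UCofibrantB m RC G

/-- The lax-latching data of a normal lax functor: for each 1-morphism `z` the
lax-latching object `LaxL(F,z)` with its canonical map to `F(z)` and the comparison map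
`δ_z` from the classical latching object, factoring the classical latching map. -/
structure LaxLatchData (RC : LocallyReedy B) (F : NormalLax B M) where
  laxLatch : ∀ {a b : B} (z : a ⟶ b), M
  toObj : ∀ {a b : B} (z : a ⟶ b), laxLatch z ⟶ F.obj z
  δ : ∀ {a b : B} (z : a ⟶ b), latchObj (RC.R a b) (F.component a b) z ⟶ laxLatch z
  fact : ∀ {a b : B} (z : a ⟶ b),
    δ z ≫ toObj z = latchMap (RC.R a b) (F.component a b) z

end TwoCat2
/-! ### Statement: Dirac masses of generating (trivial) cofibrations generate the
product structure on `K_C`, and their images under `Γ` generate the transferred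
structure on `Lax(C,M)_n`. -/

section Stmt6

variable {B : Type u₁} [Bicategory.{w, v₁} B] [Bicategory.Strict B]
variable {M : Type u} [Category.{v} M] [MonoidalCategory M]

variable (B M) in
/-- The projection `p_{AB} : K_C ⟶ Hom(C(A,B), M)`. -/
def kbProj (a b : B) : KB B M ⥤ ((a ⟶ b) ⥤ M) where
  obj P := P a b
  map σ := σ a b

/-- The set `∐_{(A,B)} δ_{AB}(S_{AB})` of Dirac masses of a family of sets of arrows. -/
def diracGenSet (δ : ∀ a b : B, ((a ⟶ b) ⥤ M) ⥤ KB B M)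
    (S : ∀ a b : B, Set (Arrow ((a ⟶ b) ⥤ M))) : Set (Arrow (KB B M)) :=
  {x | ∃ (a b : B) (α : Arrow ((a ⟶ b) ⥤ M)) (_ : α ∈ S a b),
    x = Arrow.mk ((δ a b).map α.hom)}

/-- The image of a set of arrows under `Γ`. -/
def gammaGenSet (Γ : KB B M ⥤ NormalLax B M) (S : Set (Arrow (KB B M))) :
    Set (Arrow (NormalLax B M)) :=
  {x | ∃ (α : Arrow (KB B M)) (_ : α ∈ S), x = Arrow.mk (Γ.map α.hom)}

/-- Retract argument: a map with the left lifting property against all trivial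
fibrations is a cofibration. -/
lemma cof_of_llp_trivFib {C : Type u₂} [Category.{v₂} C] (m : ModelStructure C)
    {X Y : C} (f : X ⟶ Y)
    (h : ∀ {P Q : C} (p : P ⟶ Q), m.Fib p → m.W p → HasLiftingProperty f p) :
    m.Cof f := by
  obtain ⟨Z, i, p, hi, hp, hw, hfac⟩ := m.factor_cof_trivFib f
  haveI := h p hp hw
  have sq : CommSq i f p (𝟙 Y) := ⟨by simp [hfac]⟩
  exact m.Cof_retract f i ⟨𝟙 X, 𝟙 X, sq.lift, p, by simp, sq.fac_right,
    by simpa using sq.fac_left.symm, by simp [hfac]⟩ hi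

/-- Retract argument: a map with the left lifting property against all fibrations is a
trivial cofibration. -/
lemma trivCof_of_llp_fib {C : Type u₂} [Category.{v₂} C] (m : ModelStructure C)
    {X Y : C} (f : X ⟶ Y)
    (h : ∀ {P Q : C} (p : P ⟶ Q), m.Fib p → HasLiftingProperty f p) :
    m.Cof f ∧ m.W f := by
  obtain ⟨Z, i, p, hi, hw, hp, hfac⟩ := m.factor_trivCof_fib f
  haveI := h p hp
  have sq : CommSq i f p (𝟙 Y) := ⟨by simp [hfac]⟩
  have hr : IsRetractOfMaps f i := ⟨𝟙 X, 𝟙 X, sq.lift, p, by simp, sq.fac_right,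
    by simpa using sq.fac_left.symm, by simp [hfac]⟩
  exact ⟨m.Cof_retract f i hr hi, m.W_retract f i hr hw⟩

theorem dirac_generates_product_and_transferred
    [HasLimits M] [HasColimits M]
    (m : ModelStructure M) (hcg : IsCofibrantlyGenerated m)
    -- the factor model structures on the `Hom(C(A,B), M)`, with generating data
    (mFac : ∀ a b : B, ModelStructure ((a ⟶ b) ⥤ M))
    (Iab Jab : ∀ a b : B, Set (Arrow ((a ⟶ b) ⥤ M)))
    (hIab : ∀ a b : B, GeneratesCofibrations (mFac a b) (Iab a b))
    (hJab : ∀ a b : B, GeneratesTrivialCofibrations (mFac a b) (Jab a b))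
    -- the product model structure on `K_C`
    (mK : ModelStructure (KB B M))
    (hKW : mK.W = fun _ _ σ => ∀ a b : B, (mFac a b).W (σ a b))
    (hKC : mK.Cof = fun _ _ σ => ∀ a b : B, (mFac a b).Cof (σ a b))
    (hKF : mK.Fib = fun _ _ σ => ∀ a b : B, (mFac a b).Fib (σ a b))
    -- the Dirac mass adjunctions `δ_{AB} ⊣ p_{AB}`
    (δ : ∀ a b : B, ((a ⟶ b) ⥤ M) ⥤ KB B M)
    (adjδ : ∀ a b : B, δ a b ⊣ kbProj B M a b)
    -- the transferred model structure on `Lax(C,M)_n` along `Γ ⊣ U`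
    (Γ : KB B M ⥤ NormalLax B M) (adj : Γ ⊣ laxForget B M)
    (mL : ModelStructure (NormalLax B M))
    (hW : mL.W = fun _ _ σ => mK.W ((laxForget B M).map σ))
    (hFib : mL.Fib = fun _ _ σ => mK.Fib ((laxForget B M).map σ)) :
    (GeneratesCofibrations mK (diracGenSet δ Iab) ∧
      GeneratesTrivialCofibrations mK (diracGenSet δ Jab)) ∧
    (GeneratesCofibrations mL (gammaGenSet Γ (diracGenSet δ Iab)) ∧
      GeneratesTrivialCofibrations mL (gammaGenSet Γ (diracGenSet δ Jab))) := by
  -- lifting properties transfer along the Dirac adjunctions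
  have keyI : ∀ {X Y : KB B M} (p : X ⟶ Y),
      RlpSet (diracGenSet δ Iab) p ↔ ∀ a b : B, RlpSet (Iab a b) (p a b) := by
    intro X Y p
    constructor
    · intro h a b α hα
      have h1 : HasLiftingProperty ((δ a b).map α.hom) p := by
        simpa using h (Arrow.mk ((δ a b).map α.hom)) ⟨a, b, α, hα, rfl⟩
      exact ((adjδ a b).hasLiftingProperty_iff _ _).mp h1
    · rintro h x ⟨a, b, α, hα, rfl⟩
      exact ((adjδ a b).hasLiftingProperty_iff _ _).mpr (h a b α hα)
  have keyJ : ∀ {X Y : KB B M} (p : X ⟶ Y),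
      RlpSet (diracGenSet δ Jab) p ↔ ∀ a b : B, RlpSet (Jab a b) (p a b) := by
    intro X Y p
    constructor
    · intro h a b α hα
      have h1 : HasLiftingProperty ((δ a b).map α.hom) p := by
        simpa using h (Arrow.mk ((δ a b).map α.hom)) ⟨a, b, α, hα, rfl⟩
      exact ((adjδ a b).hasLiftingProperty_iff _ _).mp h1
    · rintro h x ⟨a, b, α, hα, rfl⟩
      exact ((adjδ a b).hasLiftingProperty_iff _ _).mpr (h a b α hα)
  -- characterization of trivial fibrations / fibrations in `K_C`
  have tfI : ∀ {X Y : KB B M} (p : X ⟶ Y),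
      (mK.Fib p ∧ mK.W p) ↔ RlpSet (diracGenSet δ Iab) p := by
    intro X Y p
    rw [keyI p, hKF, hKW]
    constructor
    · rintro ⟨hf, hw⟩ a b
      exact ((hIab a b).2 (p a b)).mp ⟨hf a b, hw a b⟩
    · intro h
      exact ⟨fun a b => (((hIab a b).2 (p a b)).mpr (h a b)).1,
        fun a b => (((hIab a b).2 (p a b)).mpr (h a b)).2⟩
  have tfJ : ∀ {X Y : KB B M} (p : X ⟶ Y),
      mK.Fib p ↔ RlpSet (diracGenSet δ Jab) p := by
    intro X Y p
    rw [keyJ p, hKF]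
    exact ⟨fun hf a b => ((hJab a b).2 (p a b)).mp (hf a b),
      fun h a b => ((hJab a b).2 (p a b)).mpr (h a b)⟩
  -- the Dirac masses are (trivial) cofibrations in `K_C`
  have cofI : ∀ x ∈ diracGenSet δ Iab, mK.Cof x.hom := by
    rintro x ⟨a, b, α, hα, rfl⟩
    apply cof_of_llp_trivFib mK
    intro P Q p hp hw
    exact ((adjδ a b).hasLiftingProperty_iff _ _).mpr
      (((keyI p).mp ((tfI p).mp ⟨hp, hw⟩)) a b α hα)
  have cofJ : ∀ x ∈ diracGenSet δ Jab, mK.Cof x.hom ∧ mK.W x.hom := by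
    rintro x ⟨a, b, α, hα, rfl⟩
    apply trivCof_of_llp_fib mK
    intro P Q p hp
    exact ((adjδ a b).hasLiftingProperty_iff _ _).mpr
      (((keyJ p).mp ((tfJ p).mp hp)) a b α hα)
  -- lifting properties transfer along `Γ ⊣ U`
  have keyΓI : ∀ {X Y : NormalLax B M} (q : X ⟶ Y),
      RlpSet (gammaGenSet Γ (diracGenSet δ Iab)) q ↔
        RlpSet (diracGenSet δ Iab) ((laxForget B M).map q) := by
    intro X Y q
    constructor
    · intro h x hx
      have h1 : HasLiftingProperty (Γ.map x.hom) q := by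
        simpa using h (Arrow.mk (Γ.map x.hom)) ⟨x, hx, rfl⟩
      exact (adj.hasLiftingProperty_iff _ _).mp h1
    · rintro h y ⟨x, hx, rfl⟩
      exact (adj.hasLiftingProperty_iff _ _).mpr (h x hx)
  have keyΓJ : ∀ {X Y : NormalLax B M} (q : X ⟶ Y),
      RlpSet (gammaGenSet Γ (diracGenSet δ Jab)) q ↔
        RlpSet (diracGenSet δ Jab) ((laxForget B M).map q) := by
    intro X Y q
    constructor
    · intro h x hx
      have h1 : HasLiftingProperty (Γ.map x.hom) q := by
        simpa using h (Arrow.mk (Γ.map x.hom)) ⟨x, hx, rfl⟩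
      exact (adj.hasLiftingProperty_iff _ _).mp h1
    · rintro h y ⟨x, hx, rfl⟩
      exact (adj.hasLiftingProperty_iff _ _).mpr (h x hx)
  refine ⟨⟨⟨cofI, ?_⟩, ⟨cofJ, ?_⟩⟩, ⟨⟨?_, ?_⟩, ⟨?_, ?_⟩⟩⟩
  · intro X Y p
    exact tfI p
  · intro X Y p
    exact tfJ p
  · -- `Γ` images of Dirac masses of `I` are cofibrations in `Lax`
    rintro y ⟨x, hx, rfl⟩
    apply cof_of_llp_trivFib mL
    intro P Q p hp hw
    rw [hFib] at hp; rw [hW] at hw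
    exact (adj.hasLiftingProperty_iff _ _).mpr ((tfI _).mp ⟨hp, hw⟩ x hx)
  · intro X Y q
    rw [hFib, hW, keyΓI q]
    exact tfI _
  · rintro y ⟨x, hx, rfl⟩
    apply trivCof_of_llp_fib mL
    intro P Q p hp
    rw [hFib] at hp
    exact (adj.hasLiftingProperty_iff _ _).mpr ((tfJ _).mp hp x hx)
  · intro X Y q
    rw [hFib, keyΓJ q]
    exact tfJ _

end Stmt6
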